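/- arXiv:2109.13315 — 2 statements merged into one kernel-verified Lean document; each statement's English description precedes it below -/
import Mathlib

section
/- Let F_1, ..., F_n be fractional linear generating functions with F_k(s) = 1/(1 + m_k(1-s)), m_k > 0, and set S_0 = 0, S_k = log m_1 + ... + log m_k. Define a_k = e^{-S_k} and b_n = ∑_{k=0}^{n-1} e^{-S_k}. Then for all 0 ≤ i ≤ n and s ∈ [0,1): 1 - F_{i+1}(F_{i+2}(...F_n(s)...)) = e^{-S_i} / ( e^{-S_n}(1-s)^{-1} + b_n - b_i ). -/
/-
The substitution `s ↦ (1 - s)⁻¹` linearizes a fractional linear generating function: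
`(1 - F_k(s))⁻¹ = e^{-X_k} (1 - s)⁻¹ + 1`. Hence `e^{-S_i} (1 - F_{i,n}(s))⁻¹` is an affine function
of `(1 - s)⁻¹`, and peeling off the innermost factor `F_n` shows that its slope is `e^{-S_n}` and its
intercept grows by `e^{-S_{n-1}}` at each step, which telescopes to `b_n - b_i`.
-/

/-- The fractional linear (geometric) probability generating function with mean `exp x`. -/
noncomputable def geomPGF (x s : ℝ) : ℝ := (1 + Real.exp x * (1 - s))⁻¹

/-- The associated random walk: `walk X k = log m_1 + ... + log m_k` where `X j = log m_j`. -/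
noncomputable def walk (X : ℕ → ℝ) (k : ℕ) : ℝ := ∑ j ∈ Finset.range k, X (j + 1)

/-- Forward composition `F_{i,n}(s) = F_{i+1}(F_{i+2}(... F_n(s) ...))`, with `F_{n,n}(s) = s`,
where `F_k` is the fractional linear pgf with mean `m_k = exp (X k)`. -/
noncomputable def Fcomp (X : ℕ → ℝ) (i n : ℕ) (s : ℝ) : ℝ :=
  (List.range (n - i)).foldr (fun k t => geomPGF (X (i + k + 1)) t) s

/-- `a_k = e^{-S_k}`. -/
noncomputable def aRW (X : ℕ → ℝ) (k : ℕ) : ℝ := Real.exp (-(walk X k))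

/-- `b_m = ∑_{k=0}^{m-1} e^{-S_k}` (so `b_0 = 0`). -/
noncomputable def bRW (X : ℕ → ℝ) (m : ℕ) : ℝ := ∑ k ∈ Finset.range m, Real.exp (-(walk X k))

lemma Fcomp_self (X : ℕ → ℝ) (i : ℕ) (s : ℝ) : Fcomp X i i s = s := by
  simp [Fcomp]

lemma Fcomp_succ (X : ℕ → ℝ) {i n : ℕ} (hin : i ≤ n) (s : ℝ) :
    Fcomp X i (n + 1) s = Fcomp X i n (geomPGF (X (n + 1)) s) := by
  have hlen : n + 1 - i = n - i + 1 := by omega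
  have hlast : i + (n - i) + 1 = n + 1 := by omega
  rw [Fcomp, hlen, List.range_succ, List.foldr_append]
  simp [Fcomp, hlast]

lemma aRW_succ (X : ℕ → ℝ) (n : ℕ) : aRW X (n + 1) = aRW X n * Real.exp (-X (n + 1)) := by
  rw [aRW, aRW, walk, Finset.sum_range_succ, neg_add, Real.exp_add, walk]

lemma aRW_pos (X : ℕ → ℝ) (k : ℕ) : 0 < aRW X k :=
  Real.exp_pos _

lemma bRW_succ (X : ℕ → ℝ) (n : ℕ) : bRW X (n + 1) = bRW X n + aRW X n :=
  Finset.sum_range_succ _ _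

lemma geomPGF_lt_one (x : ℝ) {s : ℝ} (hs : s < 1) : geomPGF x s < 1 := by
  have hpos : 0 < Real.exp x * (1 - s) := mul_pos (Real.exp_pos x) (by linarith)
  exact inv_lt_one_of_one_lt₀ (by linarith)

lemma inv_one_sub_geomPGF (x : ℝ) {s : ℝ} (hs : s < 1) :
    (1 - geomPGF x s)⁻¹ = Real.exp (-x) * (1 - s)⁻¹ + 1 := by
  have hs' : 1 - s ≠ 0 := by linarith
  have hpos : 0 < Real.exp x * (1 - s) := mul_pos (Real.exp_pos x) (by linarith)
  have hden : 1 + Real.exp x * (1 - s) ≠ 0 := by linarith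
  rw [geomPGF, Real.exp_neg]
  field_simp
  ring

lemma aRW_mul_inv_one_sub_Fcomp (X : ℕ → ℝ) {i n : ℕ} (hin : i ≤ n) {s : ℝ} (hs : s < 1) :
    aRW X i * (1 - Fcomp X i n s)⁻¹ = aRW X n * (1 - s)⁻¹ + bRW X n - bRW X i := by
  induction n, hin using Nat.le_induction generalizing s with
  | base => rw [Fcomp_self]; ring
  | succ n hin ih =>
    rw [Fcomp_succ X hin, ih (geomPGF_lt_one _ hs), inv_one_sub_geomPGF _ hs, aRW_succ, bRW_succ]
    ring

/-- for fractional linear generating functions,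
`1 - F_{i,n}(s) = e^{-S_i} / ( e^{-S_n} (1-s)^{-1} + b_n - b_i )` for `0 ≤ i ≤ n`, `s ∈ [0,1)`. -/
theorem one_sub_Fcomp_eq (X : ℕ → ℝ) (i n : ℕ) (hin : i ≤ n) (s : ℝ)
    (hs : s ∈ Set.Ico (0 : ℝ) 1) :
    1 - Fcomp X i n s =
      Real.exp (-(walk X i)) /
        (Real.exp (-(walk X n)) * (1 - s)⁻¹ + bRW X n - bRW X i) := by
  change 1 - Fcomp X i n s = aRW X i / (aRW X n * (1 - s)⁻¹ + bRW X n - bRW X i)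
  rw [← aRW_mul_inv_one_sub_Fcomp X hin hs.2, div_mul_cancel_left₀ (aRW_pos X i).ne', inv_inv]
end

section
/- For an oscillating random walk S with i.i.d. increments X, the renewal function U(x) = 1_{x≥0} + ∑_{n≥1} P(S_n ≥ -x, M_n < 0) is harmonic for the walk killed at entering the negative half-line: E[U(x + X); x + X ≥ 0] = U(x) for all x ≥ 0. -/
open MeasureTheory ProbabilityTheory Filter

/-- The random walk `S_n = X_1 + ... + X_n` (increments indexed from `0`), `S_0 = 0`. -/
noncomputable def Sw {Ω : Type*} (X : ℕ → Ω → ℝ) (n : ℕ) (ω : Ω) : ℝ :=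
  ∑ k ∈ Finset.range n, X k ω

/-- `X` is nonlattice: its distribution is not concentrated on any arithmetic progression. -/
def IsLattice {Ω : Type*} [MeasurableSpace Ω] (μ : Measure Ω) (Y : Ω → ℝ) : Prop :=
  ∃ a h : ℝ, 0 < h ∧ ∀ᵐ ω ∂μ, ∃ k : ℤ, Y ω = a + k * h

/-- The strict descending ladder-height renewal function
`U(x) = 1_{x ≥ 0} + ∑_{n ≥ 1} P(S_n ≥ -x, M_n < 0)`. -/
noncomputable def Ufun {Ω : Type*} [MeasurableSpace Ω] (μ : Measure Ω) (X : ℕ → Ω → ℝ)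
    (x : ℝ) : ℝ :=
  (if 0 ≤ x then 1 else 0) +
    ∑' n : ℕ,
      (μ {ω | -x ≤ Sw X (n + 1) ω ∧ ∀ k, 1 ≤ k → k ≤ n + 1 → Sw X k ω < 0}).toReal

/-! Appending one more step `X m` at the end of the walk, independent of the first `m`, turns
`E[P(S_m ≥ -(x + X), M_m < 0)]` into `P(S_(m+1) ≥ -x, M_m < 0)`. For `x ≥ 0` this event is the
disjoint union of `{S_(m+1) ≥ -x, M_(m+1) < 0}` and of the event that `m + 1` is the first time the
walk is nonnegative. Summed over `m`, the first pieces give `U(x) - 1`, and the second ones give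
`1` because the walk a.s. becomes positive.

This proves the identity in `[0, ∞]`; the real statement needs `U < ∞`. `U(z)` is the expected
number of times `n` at which the walk killed on entering `[0, ∞)` is alive with `S_n ≥ -z`. Pick
`δ > 0` with `p := P(X ≥ δ) > 0` and `r` with `r δ > z`. After any such time the next `r` steps are
all `≥ δ` with probability `p ^ r`, independently of the past, and then the walk is killed within
`r` steps. Hence the number of such times has a geometric tail. -/

open Set Function
open scoped ENNReal

theorem ProbabilityTheory.IndepFun.measure_setOf_mem_eq_lintegral {Ω β γ : Type*}
    [MeasurableSpace Ω] [MeasurableSpace β] [MeasurableSpace γ] {μ : Measure Ω} [IsFiniteMeasure μ]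
    {V : Ω → β} {Y : Ω → γ} (hVY : IndepFun V Y μ) (hV : Measurable V) (hY : Measurable Y)
    {s : Set (β × γ)} (hs : MeasurableSet s) :
    μ {ω | (V ω, Y ω) ∈ s} = ∫⁻ ω, μ {ω' | (V ω', Y ω) ∈ s} ∂μ :=
  calc μ {ω | (V ω, Y ω) ∈ s} = μ.map (fun ω => (V ω, Y ω)) s :=
        (Measure.map_apply (hV.prodMk hY) hs).symm
    _ = (μ.map V).prod (μ.map Y) s := by
        rw [hVY.map_prod_eq_prod_map_map hV.aemeasurable hY.aemeasurable]
    _ = ∫⁻ y, μ.map V ((fun v => (v, y)) ⁻¹' s) ∂(μ.map Y) := Measure.prod_apply_symm hs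
    _ = ∫⁻ ω, μ {ω' | (V ω', Y ω) ∈ s} ∂μ := by
        rw [lintegral_map (measurable_measure_prodMk_right hs) hY]
        simp_rw [Measure.map_apply hV (measurable_prodMk_right hs)]
        rfl

theorem ENNReal.tsum_ne_top_of_le_mul_add {a : ℕ → ℝ≥0∞} {c : ℝ≥0∞} {r : ℕ} (hr : r ≠ 0)
    (hc : c < 1) (ha : ∀ k, a k ≤ 1) (hstep : ∀ k, a (k + r) ≤ c * a k) : ∑' k, a k ≠ ∞ := by
  have : NeZero r := ⟨hr⟩
  have hpow (i j : ℕ) : a (j * r + i) ≤ c ^ j := by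
    induction j with
    | zero => simpa using ha i
    | succ j ih =>
      calc a ((j + 1) * r + i) = a (j * r + i + r) := by ring_nf
        _ ≤ c * a (j * r + i) := hstep _
        _ ≤ c * c ^ j := by gcongr
        _ = c ^ (j + 1) := (pow_succ' c j).symm
  rw [← (Nat.divModEquiv r).symm.tsum_eq]
  simp only [Nat.divModEquiv_symm_apply]
  rw [ENNReal.tsum_prod (f := fun j (i : Fin r) => a (j * r + i))]
  refine ne_top_of_le_ne_top ?_
    (ENNReal.tsum_le_tsum fun j => ENNReal.tsum_le_tsum fun i => hpow i j)
  simp only [tsum_fintype, Finset.sum_const, Finset.card_univ, Fintype.card_fin, nsmul_eq_mul,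
    ENNReal.tsum_mul_left, ENNReal.tsum_geometric]
  exact ENNReal.mul_ne_top (ENNReal.natCast_ne_top r)
    (ENNReal.inv_ne_top.2 (tsub_pos_of_lt hc).ne')

namespace RandomWalk

variable {Ω : Type*} {X : ℕ → Ω → ℝ}

@[simp]
lemma Sw_zero (X : ℕ → Ω → ℝ) (ω : Ω) : Sw X 0 ω = 0 := by simp [Sw]

lemma Sw_succ (X : ℕ → Ω → ℝ) (n : ℕ) (ω : Ω) : Sw X (n + 1) ω = Sw X n ω + X n ω :=
  Finset.sum_range_succ _ _

lemma Sw_add_ge {δ : ℝ} {n r : ℕ} {ω : Ω} (h : ∀ i ∈ Finset.Ico n (n + r), δ ≤ X i ω) :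
    Sw X n ω + r * δ ≤ Sw X (n + r) ω := by
  have hsum := Finset.card_nsmul_le_sum _ _ _ h
  rw [Nat.card_Ico, Nat.add_sub_cancel_left, nsmul_eq_mul] at hsum
  rw [Sw, Sw, ← Finset.sum_range_add_sum_Ico _ (Nat.le_add_right n r)]
  linarith

def negUpTo (X : ℕ → Ω → ℝ) (m : ℕ) : Set Ω :=
  {ω | ∀ k, 1 ≤ k → k ≤ m → Sw X k ω < 0}

-- `{S_m ≥ -z, M_m < 0}`; for `m = 0` the constraint on `M_0` is void, giving the term `1_{z ≥ 0}`
def stayNeg (X : ℕ → Ω → ℝ) (z : ℝ) (m : ℕ) : Set Ω :=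
  {ω | -z ≤ Sw X m ω} ∩ negUpTo X m

def firstNonnegAt (X : ℕ → Ω → ℝ) (m : ℕ) : Set Ω :=
  {ω | 0 ≤ Sw X (m + 1) ω} ∩ negUpTo X m

lemma stayNeg_mono (X : ℕ → Ω → ℝ) (m : ℕ) : Monotone fun z => stayNeg X z m :=
  fun _ _ h _ hω => ⟨le_trans (neg_le_neg h) hω.1, hω.2⟩

lemma stayNeg_zero {z : ℝ} (hz : 0 ≤ z) : stayNeg X z 0 = univ :=
  eq_univ_of_forall fun ω => ⟨by simpa using hz, fun k hk hk' => by omega⟩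

lemma stayNeg_of_neg {z : ℝ} (hz : z < 0) (m : ℕ) : stayNeg X z m = ∅ := by
  refine eq_empty_of_forall_notMem fun ω ⟨(hle : -z ≤ Sw X m ω), hneg⟩ => ?_
  rcases m with _ | m
  · simp at hle; linarith
  · linarith [hneg (m + 1) (by omega) le_rfl]

lemma inter_negUpTo_eq_union {x : ℝ} (hx : 0 ≤ x) (m : ℕ) :
    {ω | -x ≤ Sw X (m + 1) ω} ∩ negUpTo X m = stayNeg X x (m + 1) ∪ firstNonnegAt X m := by
  ext ω
  simp only [stayNeg, firstNonnegAt, negUpTo, mem_union, mem_inter_iff, mem_ofPred_eq]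
  constructor
  · rintro ⟨h, hneg⟩
    rcases lt_or_ge (Sw X (m + 1) ω) 0 with hlt | hge
    · refine Or.inl ⟨h, fun k hk hk' => ?_⟩
      rcases Nat.le_succ_iff.1 hk' with hk' | rfl
      exacts [hneg k hk hk', hlt]
    · exact Or.inr ⟨hge, hneg⟩
  · rintro (⟨h, hneg⟩ | ⟨h, hneg⟩)
    · exact ⟨h, fun k hk hk' => hneg k hk (by omega)⟩
    · exact ⟨by linarith, hneg⟩

lemma disjoint_stayNeg_firstNonnegAt (z : ℝ) (m : ℕ) :
    Disjoint (stayNeg X z (m + 1)) (firstNonnegAt X m) :=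
  disjoint_left.2 fun _ h h' => (not_lt.2 h'.1) (h.2 (m + 1) (by omega) le_rfl)

lemma pairwise_disjoint_firstNonnegAt : Pairwise (Disjoint on firstNonnegAt X) :=
  (pairwise_disjoint_on _).2 fun m _ hm => disjoint_left.2 fun _ h h' =>
    (not_lt.2 h.1) (h'.2 (m + 1) (by omega) hm)

open scoped Classical in
noncomputable def visitCount (X : ℕ → Ω → ℝ) (z : ℝ) (n : ℕ) (ω : Ω) : ℕ :=
  ((Finset.range n).filter fun j => ω ∈ stayNeg X z j).card

-- time `n` is a visit to `stayNeg X z` preceded by exactly `k` others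
def visitAt (X : ℕ → Ω → ℝ) (z : ℝ) (k n : ℕ) : Set Ω :=
  stayNeg X z n ∩ {ω | visitCount X z n ω = k}

section Visits

variable {z : ℝ} {ω : Ω}

lemma visitCount_succ_of_mem {n : ℕ} (h : ω ∈ stayNeg X z n) :
    visitCount X z (n + 1) ω = visitCount X z n ω + 1 := by
  classical
  rw [visitCount, visitCount, Finset.range_add_one, Finset.filter_insert, if_pos h,
    Finset.card_insert_of_notMem (by simp)]

lemma visitCount_succ_of_notMem {n : ℕ} (h : ω ∉ stayNeg X z n) :
    visitCount X z (n + 1) ω = visitCount X z n ω := by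
  classical
  rw [visitCount, visitCount, Finset.range_add_one, Finset.filter_insert, if_neg h]

lemma visitCount_mono {n m : ℕ} (h : n ≤ m) : visitCount X z n ω ≤ visitCount X z m ω := by
  induction m, h using Nat.le_induction with
  | base => rfl
  | succ m hnm ih =>
    by_cases hm : ω ∈ stayNeg X z m
    · rw [visitCount_succ_of_mem hm]; omega
    · rw [visitCount_succ_of_notMem hm]; omega

lemma visitCount_le_add {n m : ℕ} (h : n ≤ m) :
    visitCount X z m ω ≤ visitCount X z n ω + (m - n) := by
  induction m, h using Nat.le_induction with
  | base => simp
  | succ m hnm ih =>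
    by_cases hm : ω ∈ stayNeg X z m
    · rw [visitCount_succ_of_mem hm]; omega
    · rw [visitCount_succ_of_notMem hm]; omega

lemma exists_mem_visitAt_of_lt {k m : ℕ} (h : k < visitCount X z m ω) :
    ∃ n < m, ω ∈ visitAt X z k n := by
  induction m with
  | zero => simp [visitCount] at h
  | succ m ih =>
    by_cases hm : ω ∈ stayNeg X z m
    · rw [visitCount_succ_of_mem hm] at h
      rcases (Nat.lt_succ_iff_lt_or_eq.1 h) with h | rfl
      · obtain ⟨n, hn, hmem⟩ := ih h
        exact ⟨n, by omega, hmem⟩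
      · exact ⟨m, by omega, hm, rfl⟩
    · rw [visitCount_succ_of_notMem hm] at h
      obtain ⟨n, hn, hmem⟩ := ih h
      exact ⟨n, by omega, hmem⟩

lemma pairwise_disjoint_visitAt (z : ℝ) (k : ℕ) : Pairwise (Disjoint on visitAt X z k) :=
  (pairwise_disjoint_on _).2 fun n _ hn => disjoint_left.2 fun ω ⟨hmem, hcount⟩ ⟨_, hcount'⟩ => by
    have := visitCount_mono (X := X) (z := z) (ω := ω) (Nat.succ_le_of_lt hn)
    rw [visitCount_succ_of_mem hmem] at this
    simp only [mem_ofPred_eq] at hcount hcount'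
    omega

lemma pairwise_disjoint_visitAt_index (z : ℝ) (n : ℕ) :
    Pairwise (Disjoint on fun k => visitAt X z k n) :=
  fun _ _ hk => disjoint_left.2 fun _ h h' => hk (h.2.symm.trans h'.2)

lemma stayNeg_eq_iUnion_visitAt (z : ℝ) (n : ℕ) : stayNeg X z n = ⋃ k, visitAt X z k n := by
  ext ω
  simp [visitAt]

lemma iUnion_visitAt_add_subset {δ : ℝ} {r : ℕ} (hr : r ≠ 0) (hrδ : z < r * δ) (k : ℕ) :
    ⋃ m, visitAt X z (k + r) m ⊆
      ⋃ n, visitAt X z k n ∩ (⋂ i ∈ Finset.Ico n (n + r), X i ⁻¹' Ici δ)ᶜ := by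
  intro ω hω
  obtain ⟨m, hm, hcount : visitCount X z m ω = k + r⟩ := mem_iUnion.1 hω
  obtain ⟨n, hnm, hn⟩ := exists_mem_visitAt_of_lt (show k < visitCount X z m ω by omega)
  refine mem_iUnion.2 ⟨n, hn, fun hgood => ?_⟩
  have hpos : 0 < Sw X (n + r) ω := by
    have := Sw_add_ge (X := X) (δ := δ) (n := n) (r := r) (ω := ω) (by simpa using hgood)
    have : -z ≤ Sw X n ω := hn.1.1
    linarith
  rcases le_or_gt (n + r) m with h | h
  · exact (hm.2 (n + r) (by omega) h).not_gt hpos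
  · have := visitCount_le_add (X := X) (z := z) (ω := ω) (Nat.succ_le_of_lt hnm)
    rw [visitCount_succ_of_mem hn.1, hn.2] at this
    omega

end Visits

section Measurability

variable [mΩ : MeasurableSpace Ω] {n : ℕ}

lemma measurable_Sw_of_le (hX : ∀ i < n, Measurable (X i)) {k : ℕ} (hk : k ≤ n) :
    Measurable (Sw X k) :=
  Finset.measurable_sum _ fun i hi => hX i (by rw [Finset.mem_range] at hi; omega)

lemma measurable_Sw (hmeas : ∀ k, Measurable (X k)) (n : ℕ) : Measurable (Sw X n) :=
  measurable_Sw_of_le (fun i _ => hmeas i) le_rfl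

lemma measurableSet_negUpTo (hS : ∀ k ≤ n, Measurable (Sw X k)) :
    MeasurableSet (negUpTo X n) :=
  measurableSet_setOfPred.2 <| Measurable.forall fun k => Measurable.forall fun _ =>
    Measurable.forall fun hk =>
      measurableSet_setOfPred.1 (measurableSet_lt (hS k hk) measurable_const)

lemma measurableSet_stayNeg (hS : ∀ k ≤ n, Measurable (Sw X k)) (z : ℝ) :
    MeasurableSet (stayNeg X z n) :=
  (measurableSet_le measurable_const (hS n le_rfl)).inter (measurableSet_negUpTo hS)

lemma measurableSet_firstNonnegAt (hmeas : ∀ k, Measurable (X k)) (m : ℕ) :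
    MeasurableSet (firstNonnegAt X m) :=
  (measurableSet_le measurable_const (measurable_Sw hmeas _)).inter
    (measurableSet_negUpTo fun k _ => measurable_Sw hmeas k)

lemma measurable_visitCount (hS : ∀ k ≤ n, Measurable (Sw X k)) (z : ℝ) :
    Measurable (visitCount X z n) := by
  classical
  have : visitCount X z n = fun ω => ∑ j ∈ Finset.range n, if ω ∈ stayNeg X z j then 1 else 0 :=
    funext fun ω => Finset.card_filter _ _
  rw [this]
  exact Finset.measurable_sum _ fun j hj => Measurable.ite
    (measurableSet_stayNeg (fun k hk => hS k (by rw [Finset.mem_range] at hj; omega)) z)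
    measurable_const measurable_const

lemma measurableSet_visitAt (hS : ∀ k ≤ n, Measurable (Sw X k)) (z : ℝ) (k : ℕ) :
    MeasurableSet (visitAt X z k n) :=
  (measurableSet_stayNeg hS z).inter (measurable_visitCount hS z (measurableSet_singleton k))

end Measurability

abbrev pastσ (X : ℕ → Ω → ℝ) (n : ℕ) : MeasurableSpace Ω :=
  ⨆ i ∈ Iio n, MeasurableSpace.comap (X i) inferInstance

abbrev futureσ (X : ℕ → Ω → ℝ) (n : ℕ) : MeasurableSpace Ω :=
  ⨆ i ∈ Ici n, MeasurableSpace.comap (X i) inferInstance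

lemma measurable_Sw_pastσ {k n : ℕ} (hk : k ≤ n) : Measurable[pastσ X n] (Sw X k) :=
  measurable_Sw_of_le (mΩ := pastσ X n) (fun i hi => (comap_measurable (X i)).mono
    (le_iSup₂ (f := fun j (_ : j ∈ Iio n) => MeasurableSpace.comap (X j) inferInstance) i hi)
    le_rfl) hk

lemma measurable_futureσ {n i : ℕ} (hi : n ≤ i) : Measurable[futureσ X n] (X i) :=
  (comap_measurable (X i)).mono
    (le_iSup₂ (f := fun j (_ : j ∈ Ici n) => MeasurableSpace.comap (X j) inferInstance) i hi) le_rfl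

variable [MeasurableSpace Ω] {μ : Measure Ω}

lemma pastσ_le (hmeas : ∀ k, Measurable (X k)) (n : ℕ) : pastσ X n ≤ ‹MeasurableSpace Ω› :=
  iSup₂_le fun i _ => (hmeas i).comap_le

lemma futureσ_le (hmeas : ∀ k, Measurable (X k)) (n : ℕ) : futureσ X n ≤ ‹MeasurableSpace Ω› :=
  iSup₂_le fun i _ => (hmeas i).comap_le

lemma indep_pastσ_futureσ (hmeas : ∀ k, Measurable (X k)) (hindep : iIndepFun X μ) (n : ℕ) :
    Indep (pastσ X n) (futureσ X n) μ :=
  indep_iSup_of_disjoint (fun i => (hmeas i).comap_le) hindep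
    (Set.disjoint_left.2 fun _ hi hi' => (not_le.2 (mem_Iio.1 hi)) (mem_Ici.1 hi'))

noncomputable def UfunENNReal (μ : Measure Ω) (X : ℕ → Ω → ℝ) (z : ℝ) : ℝ≥0∞ :=
  ∑' m, μ (stayNeg X z m)

lemma measurable_measure_stayNeg (μ : Measure Ω) (m : ℕ) :
    Measurable fun z => μ (stayNeg X z m) :=
  Monotone.measurable fun _ _ h => measure_mono (stayNeg_mono X m h)

lemma measurable_UfunENNReal (μ : Measure Ω) : Measurable (UfunENNReal μ X) :=
  Measurable.tsum fun m => measurable_measure_stayNeg μ m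

lemma UfunENNReal_of_neg (μ : Measure Ω) {z : ℝ} (hz : z < 0) : UfunENNReal μ X z = 0 := by
  simp [UfunENNReal, stayNeg_of_neg hz]

lemma lintegral_measure_stayNeg_add [IsProbabilityMeasure μ] (hmeas : ∀ k, Measurable (X k))
    (hindep : iIndepFun X μ) (hident : ∀ k, IdentDistrib (X k) (X 0) μ μ) (x : ℝ) (m : ℕ) :
    ∫⁻ ω, μ (stayNeg X (x + X 0 ω) m) ∂μ = μ ({ω | -x ≤ Sw X (m + 1) ω} ∩ negUpTo X m) := by
  have hf : Measurable fun y => μ (stayNeg X (x + y) m) :=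
    (measurable_measure_stayNeg μ m).comp (measurable_const_add x)
  have hshift : ∫⁻ ω, μ (stayNeg X (x + X 0 ω) m) ∂μ = ∫⁻ ω, μ (stayNeg X (x + X m ω) m) ∂μ := by
    rw [← lintegral_map hf (hmeas 0), ← lintegral_map hf (hmeas m), (hident m).map_eq]
  set V : Ω → ℝ × Prop := fun ω => (Sw X m ω, ω ∈ negUpTo X m)
  have hN : MeasurableSet[pastσ X m] (negUpTo X m) :=
    measurableSet_negUpTo (mΩ := pastσ X m) fun k hk => measurable_Sw_pastσ hk
  have hVpast : Measurable[pastσ X m] V :=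
    (measurable_Sw_pastσ le_rfl).prodMk ((@measurable_mem Ω _ (pastσ X m)).2 hN)
  have hind : IndepFun V (X m) μ := (IndepFun_iff_Indep _ _ _).2 <|
    indep_of_indep_of_le_left (indep_of_indep_of_le_right (indep_pastσ_futureσ hmeas hindep m)
      (measurable_futureσ le_rfl).comap_le) hVpast.comap_le
  set s : Set ((ℝ × Prop) × ℝ) := {p | -(x + p.2) ≤ p.1.1 ∧ p.1.2}
  have hs : MeasurableSet s := by
    measurability
  have hset : {ω | -x ≤ Sw X (m + 1) ω} ∩ negUpTo X m = {ω | (V ω, X m ω) ∈ s} := by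
    ext ω
    simp only [s, V, mem_inter_iff, mem_ofPred_eq, Sw_succ]
    constructor <;> rintro ⟨h, h'⟩ <;> exact ⟨by linarith, h'⟩
  rw [hshift, hset, hind.measure_setOf_mem_eq_lintegral (hVpast.mono (pastσ_le hmeas m) le_rfl)
    (hmeas m) hs]
  rfl

lemma ae_mem_iUnion_firstNonnegAt (hup : ∀ᵐ ω ∂μ, ∃ n, 0 < Sw X n ω) :
    ∀ᵐ ω ∂μ, ω ∈ ⋃ m, firstNonnegAt X m := by
  filter_upwards [hup] with ω ⟨n, hn⟩
  classical
  obtain ⟨m, rfl⟩ : ∃ m, n = m + 1 :=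
    Nat.exists_eq_succ_of_ne_zero (by rintro rfl; simp at hn)
  have hex : ∃ m, 0 ≤ Sw X (m + 1) ω := ⟨m, hn.le⟩
  refine mem_iUnion.2 ⟨Nat.find hex, Nat.find_spec hex, fun k hk hk' => ?_⟩
  obtain ⟨j, rfl⟩ := Nat.exists_eq_add_of_le' hk
  exact not_le.1 (Nat.find_min hex (by omega))

lemma tsum_measure_firstNonnegAt [IsProbabilityMeasure μ] (hmeas : ∀ k, Measurable (X k))
    (hup : ∀ᵐ ω ∂μ, ∃ n, 0 < Sw X n ω) : ∑' m, μ (firstNonnegAt X m) = 1 := by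
  have hfull : (⋃ m, firstNonnegAt X m) =ᵐ[μ] univ :=
    ae_eq_univ.2 (ae_mem_iUnion_firstNonnegAt hup)
  rw [← measure_iUnion pairwise_disjoint_firstNonnegAt (measurableSet_firstNonnegAt hmeas),
    measure_congr hfull, measure_univ]

theorem lintegral_UfunENNReal_add [IsProbabilityMeasure μ] (hmeas : ∀ k, Measurable (X k))
    (hindep : iIndepFun X μ) (hident : ∀ k, IdentDistrib (X k) (X 0) μ μ)
    (hup : ∀ᵐ ω ∂μ, ∃ n, 0 < Sw X n ω) {x : ℝ} (hx : 0 ≤ x) :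
    ∫⁻ ω, UfunENNReal μ X (x + X 0 ω) ∂μ = UfunENNReal μ X x := by
  have hterm (m : ℕ) : AEMeasurable (fun ω => μ (stayNeg X (x + X 0 ω) m)) μ :=
    ((measurable_measure_stayNeg μ m).comp ((hmeas 0).const_add x)).aemeasurable
  calc ∫⁻ ω, UfunENNReal μ X (x + X 0 ω) ∂μ
      = ∑' m, μ ({ω | -x ≤ Sw X (m + 1) ω} ∩ negUpTo X m) := by
        simp_rw [UfunENNReal, lintegral_tsum hterm,
          lintegral_measure_stayNeg_add hmeas hindep hident]
    _ = ∑' m, (μ (stayNeg X x (m + 1)) + μ (firstNonnegAt X m)) := by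
        simp_rw [inter_negUpTo_eq_union hx, measure_union (disjoint_stayNeg_firstNonnegAt x _)
          (measurableSet_firstNonnegAt hmeas _)]
    _ = μ (stayNeg X x 0) + ∑' m, μ (stayNeg X x (m + 1)) := by
        rw [ENNReal.tsum_add, tsum_measure_firstNonnegAt hmeas hup, stayNeg_zero hx, measure_univ,
          add_comm]
    _ = UfunENNReal μ X x :=
        (tsum_eq_zero_add' (f := fun m => μ (stayNeg X x m)) ENNReal.summable).symm

lemma tsum_measure_stayNeg_eq (hmeas : ∀ k, Measurable (X k)) (z : ℝ) :
    ∑' n, μ (stayNeg X z n) = ∑' k, μ (⋃ n, visitAt X z k n) := by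
  have hV (k n : ℕ) : MeasurableSet (visitAt X z k n) :=
    measurableSet_visitAt (fun j _ => measurable_Sw hmeas j) z k
  simp_rw [measure_iUnion (pairwise_disjoint_visitAt z _) (hV _), stayNeg_eq_iUnion_visitAt z,
    measure_iUnion (pairwise_disjoint_visitAt_index z _) (fun k => hV k _)]
  exact ENNReal.tsum_comm

lemma measure_biInter_preimage_Ici (hindep : iIndepFun X μ)
    (hident : ∀ k, IdentDistrib (X k) (X 0) μ μ) (δ : ℝ) (n r : ℕ) :
    μ (⋂ i ∈ Finset.Ico n (n + r), X i ⁻¹' Ici δ) = μ (X 0 ⁻¹' Ici δ) ^ r := by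
  rw [hindep.meas_biInter fun i _ => ⟨Ici δ, measurableSet_Ici, rfl⟩,
    Finset.prod_congr rfl fun i _ => (hident i).measure_mem_eq measurableSet_Ici,
    Finset.prod_const, Nat.card_Ico, Nat.add_sub_cancel_left]

lemma measure_iUnion_visitAt_add_le [IsProbabilityMeasure μ] (hmeas : ∀ k, Measurable (X k))
    (hindep : iIndepFun X μ) (hident : ∀ k, IdentDistrib (X k) (X 0) μ μ) {z δ : ℝ} {r : ℕ}
    (hr : r ≠ 0) (hrδ : z < r * δ) (k : ℕ) :
    μ (⋃ m, visitAt X z (k + r) m) ≤ (1 - μ (X 0 ⁻¹' Ici δ) ^ r) * μ (⋃ n, visitAt X z k n) := by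
  set G : ℕ → Set Ω := fun n => ⋂ i ∈ Finset.Ico n (n + r), X i ⁻¹' Ici δ
  have hG (n : ℕ) : MeasurableSet[futureσ X n] (G n) :=
    Finset.measurableSet_biInter _ fun i hi =>
      measurable_futureσ (Finset.mem_Ico.1 hi).1 measurableSet_Ici
  have hV (n : ℕ) : MeasurableSet[pastσ X n] (visitAt X z k n) :=
    measurableSet_visitAt (mΩ := pastσ X n) (fun j hj => measurable_Sw_pastσ hj) z k
  calc μ (⋃ m, visitAt X z (k + r) m) ≤ ∑' n, μ (visitAt X z k n ∩ (G n)ᶜ) :=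
        (measure_mono (iUnion_visitAt_add_subset hr hrδ k)).trans (measure_iUnion_le _)
    _ = ∑' n, μ (visitAt X z k n) * (1 - μ (X 0 ⁻¹' Ici δ) ^ r) := by
        refine tsum_congr fun n => ?_
        rw [(Indep_iff _ _ _).1 (indep_pastσ_futureσ hmeas hindep n) _ _ (hV n) (hG n).compl,
          prob_compl_eq_one_sub (futureσ_le hmeas n _ (hG n)),
          measure_biInter_preimage_Ici hindep hident]
    _ = _ := by
        rw [ENNReal.tsum_mul_right, measure_iUnion (pairwise_disjoint_visitAt z k)
          (fun n => pastσ_le hmeas n _ (hV n)), mul_comm]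

lemma exists_measure_preimage_Ici_ne_zero [IsProbabilityMeasure μ]
    (hident : ∀ k, IdentDistrib (X k) (X 0) μ μ) (hup : ∀ᵐ ω ∂μ, ∃ n, 0 < Sw X n ω) :
    ∃ δ > 0, μ (X 0 ⁻¹' Ici δ) ≠ 0 := by
  by_contra! h
  have hIoi : μ (X 0 ⁻¹' Ioi 0) = 0 := by
    have : X 0 ⁻¹' Ioi 0 = ⋃ j : ℕ, X 0 ⁻¹' Ici (1 / (j + 1)) := by
      ext ω
      simp only [mem_preimage, mem_Ioi, mem_iUnion, mem_Ici]
      exact ⟨fun h => (exists_nat_one_div_lt h).imp fun _ => le_of_lt,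
        fun ⟨j, hj⟩ => lt_of_lt_of_le (by positivity) hj⟩
    rw [this]
    exact measure_iUnion_null fun j => h _ (by positivity)
  have hle : ∀ᵐ ω ∂μ, ∀ k, X k ω ≤ 0 := ae_all_iff.2 fun k => by
    rw [ae_iff]
    simp only [not_le]
    exact ((hident k).measure_mem_eq measurableSet_Ioi).trans hIoi
  obtain ⟨ω, ⟨n, hn⟩, hle⟩ := (hup.and hle).exists
  exact hn.not_ge (Finset.sum_nonpos fun k _ => hle k)

theorem UfunENNReal_ne_top [IsProbabilityMeasure μ] (hmeas : ∀ k, Measurable (X k))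
    (hindep : iIndepFun X μ) (hident : ∀ k, IdentDistrib (X k) (X 0) μ μ)
    (hup : ∀ᵐ ω ∂μ, ∃ n, 0 < Sw X n ω) (z : ℝ) : UfunENNReal μ X z ≠ ∞ := by
  obtain ⟨δ, hδ, hp⟩ := exists_measure_preimage_Ici_ne_zero hident hup
  obtain ⟨r, hr⟩ := exists_nat_gt (z / δ)
  have hrδ : z < ((r + 1 : ℕ) : ℝ) * δ := by
    rw [div_lt_iff₀ hδ] at hr
    push_cast
    linarith
  rw [UfunENNReal, tsum_measure_stayNeg_eq hmeas]
  exact ENNReal.tsum_ne_top_of_le_mul_add r.succ_ne_zero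
    (ENNReal.sub_lt_self ENNReal.one_ne_top one_ne_zero (pow_ne_zero _ hp))
    (fun _ => prob_le_one) (measure_iUnion_visitAt_add_le hmeas hindep hident r.succ_ne_zero hrδ)

lemma Ufun_eq_toReal_UfunENNReal [IsProbabilityMeasure μ] {z : ℝ} (hz : UfunENNReal μ X z ≠ ∞) :
    Ufun μ X z = (UfunENNReal μ X z).toReal := by
  rw [UfunENNReal, tsum_eq_zero_add' (f := fun m => μ (stayNeg X z m)) ENNReal.summable] at hz ⊢
  obtain ⟨h0, hrest⟩ := ENNReal.add_ne_top.1 hz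
  rw [Ufun, ENNReal.toReal_add h0 hrest, ENNReal.tsum_toReal_eq fun n => measure_ne_top μ _]
  congr 1
  rcases le_or_gt 0 z with h | h
  · simp [stayNeg_zero h, h]
  · simp [stayNeg_of_neg h, not_le.2 h]

end RandomWalk

open RandomWalk in
/-- for an oscillating i.i.d. random walk, `U` is harmonic for the walk killed
upon entering the negative half-line: `E[U(x + X); x + X ≥ 0] = U(x)` for all `x ≥ 0`. -/
theorem Ufun_harmonic {Ω : Type*} [MeasurableSpace Ω] (μ : Measure Ω)
    [IsProbabilityMeasure μ] (X : ℕ → Ω → ℝ) (hmeas : ∀ k, Measurable (X k))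
    (hindep : iIndepFun X μ)
    (hident : ∀ k, IdentDistrib (X k) (X 0) μ μ)
    (hosc : ∀ᵐ ω ∂μ, (∀ c : ℝ, ∃ᶠ n in atTop, c < Sw X n ω) ∧
      (∀ c : ℝ, ∃ᶠ n in atTop, Sw X n ω < c)) :
    ∀ x : ℝ, 0 ≤ x →
      ∫ ω in {ω | 0 ≤ x + X 0 ω}, Ufun μ X (x + X 0 ω) ∂μ = Ufun μ X x := by
  intro x hx
  have hup : ∀ᵐ ω ∂μ, ∃ n, 0 < Sw X n ω := hosc.mono fun _ h => (h.1 0).exists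
  have hfin := UfunENNReal_ne_top hmeas hindep hident hup
  have hU (z : ℝ) : Ufun μ X z = (UfunENNReal μ X z).toReal :=
    Ufun_eq_toReal_UfunENNReal (hfin z)
  have hkilled : ∀ ω ∉ {ω | 0 ≤ x + X 0 ω}, Ufun μ X (x + X 0 ω) = 0 := fun ω hω => by
    rw [hU, UfunENNReal_of_neg μ (not_le.1 hω), ENNReal.toReal_zero]
  rw [setIntegral_eq_integral_of_forall_compl_eq_zero hkilled]
  have hmeasU : AEMeasurable (fun ω => UfunENNReal μ X (x + X 0 ω)) μ :=
    ((measurable_UfunENNReal μ).comp ((hmeas 0).const_add x)).aemeasurable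
  simp_rw [hU]
  rw [integral_toReal hmeasU (ae_of_all _ fun _ => (hfin _).lt_top),
    lintegral_UfunENNReal_add hmeas hindep hident hup hx]
end
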